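/- Assume m ≥ 2. Let v ∈ V with v ≠ 0 and let G_v = {g ∈ G : g v = v} be its stabilizer in G = Sp(V). Then G_v has exactly 2q − 1 orbits on V∖{0}. -/

import Mathlib

set_option synthInstance.maxHeartbeats 1000000
set_option maxHeartbeats 1000000

open scoped BigOperators

/-- The field with `2^f` elements (`q = 2^f`). -/
abbrev Fq (f : ℕ) : Type := GaloisField 2 f

/-- The natural `2m`-dimensional symplectic space over `Fq f`. -/
abbrev V (f m : ℕ) : Type := (Fin m → Fq f) × (Fin m → Fq f)

/-- The standard nondegenerate alternating bilinear form
`B((x,y),(x',y')) = ∑ i, (x i * y' i + y i * x' i)`. -/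
noncomputable def B {f m : ℕ} (u w : V f m) : Fq f :=
  ∑ i, (u.1 i * w.2 i + u.2 i * w.1 i)

/-- The symplectic group `Sp_{2m}(2^f)`: the invertible linear maps preserving `B`. -/
def Sp (f m : ℕ) : Subgroup ((V f m →ₗ[Fq f] V f m)ˣ) where
  carrier := {g | ∀ u w : V f m,
    B ((g : V f m →ₗ[Fq f] V f m) u) ((g : V f m →ₗ[Fq f] V f m) w) = B u w}
  one_mem' := by intro u w; simp
  mul_mem' := by
    intro g h hg hh u w
    simp only [Units.val_mul, Module.End.mul_apply]
    rw [hg, hh]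
  inv_mem' := by
    intro g hg u w
    have := hg (((g⁻¹ : _ˣ) : V f m →ₗ[Fq f] V f m) u)
      (((g⁻¹ : _ˣ) : V f m →ₗ[Fq f] V f m) w)
    simpa [← Module.End.mul_apply, ← Units.val_mul] using this.symm

/-- The natural action of the symplectic group on `V` by matrix multiplication. -/
noncomputable instance {f m : ℕ} : MulAction (Sp f m) (V f m) where
  smul g v := ((g : (V f m →ₗ[Fq f] V f m)ˣ) : V f m →ₗ[Fq f] V f m) v
  one_smul v := by simp [HSMul.hSMul, SMul.smul]
  mul_smul g h v := by simp [HSMul.hSMul, SMul.smul, Units.val_mul]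

/-!
The stabilizer `Gᵥ` of `v` fixes every multiple of `v` and preserves `B v ·`, so the `q - 1`
nonzero multiples of `v` are fixed points, and `B v ·` is an orbit invariant on the vectors
outside `span v`. Conversely, if `u, u' ∉ span v` and `B v u = B v u'`, then `u' - u ∈ v^⊥`, so
the symplectic transvection along `u' - u` lies in `Gᵥ`; it maps `u` to `u'` as soon as
`B u u' ≠ 0`. When `B u u' = 0`, nondegeneracy provides an `x` with `B v x = B v u` and
`B u x ≠ 0 ≠ B x u'` to pass through. As `dim V ≥ 4`, every value of `B v ·` is taken outside
`span v`, giving `q` more orbits: `2q - 1` in all.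
-/

namespace LinearMap.BilinForm

open Module Submodule

variable {K W : Type*} [Field K] [AddCommGroup W] [Module K W] {β : LinearMap.BilinForm K W}

def symplecticTransvection (hβ : β.IsAlt) (w : W) (l : K) : W ≃ₗ[K] W :=
  LinearEquiv.transvection (f := l • β.flip w) (v := w) (by simp [hβ.self_eq_zero])

theorem symplecticTransvection_apply (hβ : β.IsAlt) (w : W) (l : K) (x : W) :
    symplecticTransvection hβ w l x = x + (l * β x w) • w :=
  rfl

theorem apply_symplecticTransvection (hβ : β.IsAlt) (w : W) (l : K) (x y : W) :
    β (symplecticTransvection hβ w l x) (symplecticTransvection hβ w l y) = β x y := by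
  simp only [symplecticTransvection_apply, map_add, map_smul, LinearMap.add_apply,
    LinearMap.smul_apply, smul_eq_mul, hβ.self_eq_zero, ← hβ.neg_eq y w]
  ring

theorem symplecticTransvection_apply_of_apply_eq_zero (hβ : β.IsAlt) {w x : W} (l : K)
    (hx : β x w = 0) : symplecticTransvection hβ w l x = x := by
  rw [symplecticTransvection_apply, hx, mul_zero, zero_smul, add_zero]

theorem symplecticTransvection_sub_apply (hβ : β.IsAlt) {u u' : W} (h : β u u' ≠ 0) :
    symplecticTransvection hβ (u' - u) (β u u')⁻¹ u = u' := by
  rw [symplecticTransvection_apply, map_sub, hβ.self_eq_zero, sub_zero, inv_mul_cancel₀ h,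
    one_smul, add_sub_cancel]

theorem apply_eq_zero_of_mem_span_singleton (hβ : β.IsAlt) {v u : W} (hu : u ∈ K ∙ v) :
    β v u = 0 := by
  obtain ⟨a, rfl⟩ := mem_span_singleton.1 hu
  rw [map_smul, hβ.self_eq_zero, smul_zero]

theorem exists_forall_apply_eq_of_linearIndependent [FiniteDimensional K W]
    (hβ : β.Nondegenerate) {ι : Type*} {w : ι → W} (hw : LinearIndependent K w) (c : ι → K) :
    ∃ x, ∀ i, β (w i) x = c i := by
  obtain ⟨l, hl⟩ := LinearMap.exists_extend ((Basis.span hw).constr K c)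
  refine ⟨(β.flip.toDual hβ.flip).symm l, fun i => ?_⟩
  rw [← flip_apply β, ← toDual_def hβ.flip, LinearEquiv.apply_symm_apply]
  calc l (w i) = (l.comp (span K (Set.range w)).subtype) (Basis.span hw i) := by
        rw [Basis.span_apply]; rfl
    _ = c i := by rw [hl, Basis.constr_basis]

theorem exists_notMem_span_singleton_apply_eq [FiniteDimensional K W] (hβ : β.IsAlt)
    (hnd : β.Nondegenerate) (hW : 2 < finrank K W) {v : W} (hv : v ≠ 0) (c : K) :
    ∃ u, u ∉ K ∙ v ∧ β v u = c := by
  by_cases hc : c = 0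
  · suffices ¬ ker (β v) ≤ K ∙ v by
      obtain ⟨u, hu, hvu⟩ := SetLike.not_le_iff_exists.1 this
      exact ⟨u, hvu, hc ▸ hu⟩
    intro hle
    have hrange : finrank K (range (β v)) ≤ 1 :=
      (Submodule.finrank_le _).trans_eq (finrank_self K)
    have hker := (Submodule.finrank_mono hle).trans_eq (finrank_span_singleton hv)
    have := (β v).finrank_range_add_finrank_ker
    omega
  · obtain ⟨u, hu⟩ := exists_forall_apply_eq_of_linearIndependent hnd
      (linearIndependent_unique_iff.2 hv : LinearIndependent K ![v]) ![c]
    have hvu : β v u = c := hu 0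
    exact ⟨u, fun h => hc (hvu ▸ apply_eq_zero_of_mem_span_singleton hβ h), hvu⟩

theorem exists_apply_ne_zero_of_notMem_span_singleton [FiniteDimensional K W] (hβ : β.IsAlt)
    (hnd : β.Nondegenerate) {v u u' : W} (hv : v ≠ 0) (hu : u ∉ K ∙ v) (hu' : u' ∉ K ∙ v)
    (huu' : β u u' = 0) : ∃ x, β v x = β v u ∧ β u x ≠ 0 ∧ β u' x ≠ 0 := by
  have hvu : LinearIndependent K ![v, u] :=
    (LinearIndependent.pair_iff' hv).2 fun a h => hu (mem_span_singleton.2 ⟨a, h⟩)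
  by_cases hspan : u' ∈ span K {v, u}
  · obtain ⟨x, hx⟩ := exists_forall_apply_eq_of_linearIndependent hnd hvu ![β v u, 1]
    obtain ⟨a, b, rfl⟩ := mem_span_pair.1 hspan
    have hb : b ≠ 0 := by
      rintro rfl
      exact hu' (mem_span_singleton.2 ⟨a, by rw [zero_smul, add_zero]⟩)
    have hxv : β v x = β v u := hx 0
    have hxu : β u x = 1 := hx 1
    have ha : a * β v u = 0 := by
      simpa [hβ.self_eq_zero, ← hβ.neg_eq v u] using huu'
    refine ⟨x, hxv, by simp [hxu], ?_⟩
    simpa [hxv, hxu, ha] using hb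
  · have hind : LinearIndependent K ![u', v, u] :=
      linearIndependent_finCons.2 ⟨hvu, by rwa [Matrix.range_cons_cons_empty]⟩
    obtain ⟨x, hx⟩ := exists_forall_apply_eq_of_linearIndependent hnd hind ![1, β v u, 1]
    have hxu' : β u' x = 1 := hx 0
    have hxu : β u x = 1 := hx 2
    exact ⟨x, hx 1, by simp [hxu], by simp [hxu']⟩

end LinearMap.BilinForm

namespace MulAction

variable {G X : Type*} [Group G] [MulAction G X]

theorem orbit_stabilizer_eq_setOf (x u : X) :
    orbit (stabilizer G x) u = {y | ∃ g : G, g • x = x ∧ g • u = y} := by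
  ext y
  exact ⟨fun ⟨⟨g, hg⟩, h⟩ => ⟨g, hg, h⟩, fun ⟨g, hg, h⟩ => ⟨⟨g, hg⟩, h⟩⟩

theorem natCard_setOf_orbit_eq_of_transversal {I : Type*} {p : X → Prop} (rep : I → X)
    (hrep : ∀ i, p (rep i)) (hinj : ∀ i j, rep j ∈ orbit G (rep i) → i = j)
    (hcover : ∀ x, p x → ∃ i, x ∈ orbit G (rep i)) :
    Nat.card {s : Set X | ∃ x, p x ∧ s = orbit G x} = Nat.card I := by
  let F : I → {s : Set X | ∃ x, p x ∧ s = orbit G x} := fun i =>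
    ⟨orbit G (rep i), rep i, hrep i, rfl⟩
  refine (Nat.card_eq_of_bijective F ⟨fun i j hij => hinj i j ?_, ?_⟩).symm
  · have hij' : orbit G (rep i) = orbit G (rep j) := congrArg Subtype.val hij
    exact hij' ▸ mem_orbit_self (rep j)
  · rintro ⟨s, x, hx, rfl⟩
    obtain ⟨i, hi⟩ := hcover x hx
    exact ⟨i, Subtype.ext (orbit_eq_iff.2 hi).symm⟩

end MulAction

section SymplecticSpace

variable {f m : ℕ}

open LinearMap.BilinForm

noncomputable def Bform : LinearMap.BilinForm (Fq f) (V f m) :=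
  LinearMap.mk₂ (Fq f) B
    (fun _ _ _ => by
      simp only [B, Prod.fst_add, Prod.snd_add, Pi.add_apply, add_mul, Finset.sum_add_distrib]
      abel)
    (fun _ _ _ => by
      simp only [B, Prod.smul_fst, Prod.smul_snd, Pi.smul_apply, smul_eq_mul, Finset.mul_sum,
        mul_add, mul_assoc])
    (fun _ _ _ => by
      simp only [B, Prod.fst_add, Prod.snd_add, Pi.add_apply, mul_add, Finset.sum_add_distrib]
      abel)
    (fun _ _ _ => by
      simp only [B, Prod.smul_fst, Prod.smul_snd, Pi.smul_apply, smul_eq_mul, Finset.mul_sum,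
        mul_add, mul_left_comm])

theorem Bform_apply (u w : V f m) : Bform u w = B u w :=
  rfl

theorem Bform_isAlt : (Bform : LinearMap.BilinForm (Fq f) (V f m)).IsAlt := fun u =>
  show B u u = 0 from Finset.sum_eq_zero fun i _ => by
    rw [mul_comm (u.2 i)]; exact CharTwo.add_self_eq_zero _

theorem Bform_nondegenerate : (Bform : LinearMap.BilinForm (Fq f) (V f m)).Nondegenerate := by
  refine Bform_isAlt.isRefl.nondegenerate_iff_separatingLeft.2 fun u hu => ?_
  ext j
  · simpa [Bform_apply, B, Pi.single_apply] using hu (0, Pi.single j 1)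
  · simpa [Bform_apply, B, Pi.single_apply] using hu (Pi.single j 1, 0)

theorem finrank_V : Module.finrank (Fq f) (V f m) = m + m := by
  rw [Module.finrank_prod, Module.finrank_fin_fun]

noncomputable def Sp.transvection (w : V f m) (l : Fq f) : Sp f m :=
  ⟨LinearMap.GeneralLinearGroup.ofLinearEquiv (symplecticTransvection Bform_isAlt w l),
    apply_symplecticTransvection Bform_isAlt w l⟩

theorem Sp.smul_comm (g : Sp f m) (a : Fq f) (x : V f m) : g • a • x = a • g • x :=
  map_smul ((g : (V f m →ₗ[Fq f] V f m)ˣ) : V f m →ₗ[Fq f] V f m) a x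

end SymplecticSpace

section StabilizerOrbits

variable {f m : ℕ} {v : V f m}

open MulAction LinearMap.BilinForm Submodule

local notation "Gᵥ" => stabilizer (Sp f m) v

theorem B_smul_of_mem_stabilizer {g : Sp f m} (hg : g ∈ Gᵥ) (u : V f m) :
    B v (g • u) = B v u := by
  conv_lhs => rw [← mem_stabilizer_iff.1 hg]
  exact g.2 v u

theorem mem_orbit_stabilizer_smul_iff {a : Fq f} {u : V f m} :
    u ∈ orbit Gᵥ (a • v) ↔ u = a • v := by
  refine ⟨?_, fun h => h ▸ mem_orbit_self _⟩
  rintro ⟨⟨g, hg⟩, rfl⟩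
  exact (Sp.smul_comm g a v).trans (congrArg _ hg)

theorem mem_orbit_stabilizer_of_B_ne_zero {u u' : V f m} (hvu : B v u = B v u')
    (huu' : B u u' ≠ 0) : u' ∈ orbit Gᵥ u := by
  have hv : Bform v (u' - u) = 0 := by rw [map_sub, sub_eq_zero]; exact hvu.symm
  refine ⟨⟨Sp.transvection (u' - u) (B u u')⁻¹, ?_⟩, ?_⟩
  · exact symplecticTransvection_apply_of_apply_eq_zero Bform_isAlt _ hv
  · exact symplecticTransvection_sub_apply Bform_isAlt (β := Bform) huu'

theorem mem_orbit_stabilizer_of_notMem_span_singleton (hv : v ≠ 0) {u u' : V f m}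
    (hu : u ∉ Fq f ∙ v) (hu' : u' ∉ Fq f ∙ v) (hvu : B v u = B v u') :
    u' ∈ orbit Gᵥ u := by
  by_cases huu' : B u u' = 0
  · obtain ⟨x, hvx, hux, hu'x⟩ := exists_apply_ne_zero_of_notMem_span_singleton Bform_isAlt
      Bform_nondegenerate hv hu hu' huu'
    have hxu' : B x u' ≠ 0 := by rwa [← Bform_apply, ← Bform_isAlt.neg_eq, neg_ne_zero]
    have hux_orbit : x ∈ orbit Gᵥ u := mem_orbit_stabilizer_of_B_ne_zero hvx.symm hux
    rw [← orbit_eq_iff.2 hux_orbit]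
    exact mem_orbit_stabilizer_of_B_ne_zero (hvx.trans hvu) hxu'
  · exact mem_orbit_stabilizer_of_B_ne_zero hvu huu'

theorem mem_orbit_stabilizer_iff_of_notMem_span_singleton (hv : v ≠ 0) {u u' : V f m}
    (hu : u ∉ Fq f ∙ v) : u' ∈ orbit Gᵥ u ↔ u' ∉ Fq f ∙ v ∧ B v u' = B v u := by
  refine ⟨fun h => ⟨fun hu' => hu ?_, ?_⟩, fun h =>
    mem_orbit_stabilizer_of_notMem_span_singleton hv hu h.1 h.2.symm⟩
  · obtain ⟨a, rfl⟩ := mem_span_singleton.1 hu'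
    rw [mem_orbit_stabilizer_smul_iff.1 (mem_orbit_symm.1 h)]
    exact smul_mem _ a (mem_span_singleton_self v)
  · obtain ⟨⟨g, hg⟩, rfl⟩ := h
    exact B_smul_of_mem_stabilizer hg u

noncomputable def orbitRep (v : V f m) (w : Fq f → V f m) : Fq f ⊕ (Fq f)ˣ → V f m :=
  Sum.elim w fun a => (a : Fq f) • v

variable {w : Fq f → V f m} (hv : v ≠ 0) (hw : ∀ c, w c ∉ Fq f ∙ v ∧ B v (w c) = c)
include hv hw

theorem orbitRep_ne_zero (i : Fq f ⊕ (Fq f)ˣ) : orbitRep v w i ≠ 0 := by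
  rcases i with c | a
  · exact fun h : w c = 0 => (hw c).1 (h ▸ zero_mem _)
  · exact smul_ne_zero a.ne_zero hv

theorem eq_of_orbitRep_mem_orbit (i j : Fq f ⊕ (Fq f)ˣ)
    (h : orbitRep v w j ∈ orbit Gᵥ (orbitRep v w i)) : i = j := by
  have hsmul (a : (Fq f)ˣ) : (a : Fq f) • v ∈ Fq f ∙ v := smul_mem _ _ (mem_span_singleton_self v)
  rcases i with c | a <;> rcases j with c' | a' <;> simp only [orbitRep, Sum.elim_inl,
    Sum.elim_inr] at h
  · rw [mem_orbit_stabilizer_iff_of_notMem_span_singleton hv (hw c).1, (hw c).2, (hw c').2] at h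
    rw [h.2]
  · rw [mem_orbit_stabilizer_iff_of_notMem_span_singleton hv (hw c).1] at h
    exact absurd (hsmul a') h.1
  · exact absurd (mem_orbit_stabilizer_smul_iff.1 h ▸ hsmul a) (hw c').1
  · rw [mem_orbit_stabilizer_smul_iff, (smul_left_injective _ hv).eq_iff, Units.val_inj] at h
    rw [h]

theorem exists_mem_orbit_orbitRep (u : V f m) (hu : u ≠ 0) :
    ∃ i, u ∈ orbit Gᵥ (orbitRep v w i) := by
  by_cases hspan : u ∈ Fq f ∙ v
  · obtain ⟨a, rfl⟩ := mem_span_singleton.1 hspan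
    exact ⟨.inr (Units.mk0 a (left_ne_zero_of_smul hu)), mem_orbit_self _⟩
  · refine ⟨.inl (B v u), ?_⟩
    rw [orbitRep, Sum.elim_inl, mem_orbit_stabilizer_iff_of_notMem_span_singleton hv (hw _).1,
      (hw _).2]
    exact ⟨hspan, rfl⟩

end StabilizerOrbits

/-- For `m ≥ 2` and a nonzero vector `v`, the stabilizer `G_v` of `v` in `Sp_{2m}(2^f)` has
exactly `2q - 1` orbits on `V \ {0}` (where `q = 2^f`); i.e. there are exactly `2q - 1`
distinct `G_v`-orbits of nonzero vectors. -/
theorem stabilizer_orbits_card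
    (f m : ℕ) (hf : 1 ≤ f) (hm : 2 ≤ m) (v : V f m) (hv : v ≠ 0) :
    Nat.card {s : Set (V f m) | ∃ u : V f m, u ≠ 0 ∧
      s = {u' | ∃ g : Sp f m, g • v = v ∧ g • u = u'}} = 2 * 2 ^ f - 1 := by
  simp only [← MulAction.orbit_stabilizer_eq_setOf]
  have hdim : 2 < Module.finrank (Fq f) (V f m) := by rw [finrank_V]; omega
  choose w hw using LinearMap.BilinForm.exists_notMem_span_singleton_apply_eq Bform_isAlt
    Bform_nondegenerate hdim hv
  rw [MulAction.natCard_setOf_orbit_eq_of_transversal (orbitRep v w) (orbitRep_ne_zero hv hw)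
    (eq_of_orbitRep_mem_orbit hv hw) (exists_mem_orbit_orbitRep hv hw), Nat.card_sum,
    Nat.card_units, GaloisField.card 2 f (by omega)]
  have := @Nat.one_le_two_pow f
  omega
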